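/- Let G be a split graph on vertices {1,…,n} with partition into a clique C and a stable set S, and let F be a nonempty face of the Hansen polytope H(G). Then F is contained in no type-(1)-facet [ε, B] (ε ∈ {+1,−1}, B ⊆ C) if and only if F contains vertices of both signs of the form ±(e_0 + Σ_{i∈A} e_i) with A ⊆ S, i.e., there exist A, A' ⊆ S with e_0 + Σ_{i∈A} e_i ∈ F and −(e_0 + Σ_{i∈A'} e_i) ∈ F. -/
import Mathlib


/-- A finset of vertices is stable (independent) in `G` if no two of its elements are adjacent. -/
def IsStable {n : ℕ} (G : SimpleGraph (Fin n)) (I : Finset (Fin n)) : Prop :=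
  ∀ ⦃a⦄, a ∈ I → ∀ ⦃b⦄, b ∈ I → ¬ G.Adj a b

/-- The point `e_0 + ∑_{i ∈ I} e_i ∈ ℝ^{n+1}`. -/
def hansenVert {n : ℕ} (I : Finset (Fin n)) : Fin (n + 1) → ℝ :=
  fun j => Fin.cases 1 (fun i => if i ∈ I then 1 else 0) j

/-- The Hansen polytope of `G`. -/
def hansenPolytope {n : ℕ} (G : SimpleGraph (Fin n)) : Set (Fin (n + 1) → ℝ) :=
  convexHull ℝ
    {x | ∃ I : Finset (Fin n), IsStable G I ∧ (x = hansenVert I ∨ x = -hansenVert I)}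

/-- The face `[ε, K] = { x ∈ H(G) : ε·(−x_0 + 2·∑_{i ∈ K} x_i) = 1 }` of the Hansen
polytope, for a sign `ε` and a clique `K`. -/
def hFace {n : ℕ} (G : SimpleGraph (Fin n)) (ε : ℝ) (K : Finset (Fin n)) :
    Set (Fin (n + 1) → ℝ) :=
  {x ∈ hansenPolytope G | ε * (-(x 0) + 2 * (∑ i ∈ K, x i.succ)) = 1}

open Finset

lemma hansenVert_zero {n : ℕ} (I : Finset (Fin n)) : hansenVert I 0 = 1 := by
  simp [hansenVert]

lemma sum_hansenVert {n : ℕ} (I B : Finset (Fin n)) :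
    ∑ i ∈ B, hansenVert I i.succ = ((B.filter (· ∈ I)).card : ℝ) := by
  simp [hansenVert, Finset.sum_boole, Finset.filter_mem_eq_inter]

lemma stable_subset {n : ℕ} {G : SimpleGraph (Fin n)} {I J : Finset (Fin n)}
    (hI : IsStable G I) (hJI : J ⊆ I) : IsStable G J :=
  fun _ ha _ hb => hI (hJI ha) (hJI hb)

lemma filter_eq_singleton_of_clique {n : ℕ} {G : SimpleGraph (Fin n)} {C : Finset (Fin n)}
    (hC : G.IsClique (↑C : Set (Fin n))) {I B : Finset (Fin n)} (hI : IsStable G I)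
    (hB : B ⊆ C) {c : Fin n} (hcI : c ∈ I) (hcB : c ∈ B) :
    B.filter (· ∈ I) = {c} := by
  ext d
  simp only [Finset.mem_filter, Finset.mem_singleton]
  constructor
  · rintro ⟨hdB, hdI⟩
    by_contra hdc
    exact hI hdI hcI (hC (hB hdB) (hB hcB) hdc)
  · rintro rfl; exact ⟨hcB, hcI⟩

/-- the linear functional defining `hFace`. -/
def hansenFun {n : ℕ} (ε : ℝ) (B : Finset (Fin n)) : (Fin (n + 1) → ℝ) →ₗ[ℝ] ℝ where
  toFun x := ε * (-(x 0) + 2 * ∑ i ∈ B, x i.succ)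
  map_add' x y := by simp only [Pi.add_apply, Finset.sum_add_distrib]; ring
  map_smul' c x := by
    simp only [Pi.smul_apply, smul_eq_mul, ← Finset.mul_sum, RingHom.id_apply]; ring

lemma face_val {E : Type*} [AddCommGroup E] [Module ℝ E] {V : Set E} (hVfin : V.Finite)
    (l g : E →ₗ[ℝ] ℝ) {x : E} (hx : x ∈ convexHull ℝ V)
    (hmax : ∀ v ∈ V, l v ≤ l x)
    (hg : ∀ v ∈ V, l v = l x → g v = 1) : g x = 1 := by
  have hVs : V = ↑hVfin.toFinset := (Set.Finite.coe_toFinset hVfin).symm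
  set s := hVfin.toFinset with hs
  rw [hVs, Finset.convexHull_eq] at hx
  obtain ⟨w, hw0, hw1, hwx⟩ := hx
  rw [Finset.centerMass_eq_of_sum_1 _ _ hw1] at hwx
  simp only [id] at hwx
  have hmem : ∀ y ∈ s, y ∈ V := fun y hy => (Set.Finite.mem_toFinset hVfin).mp hy
  have hlx : ∑ y ∈ s, w y * l y = l x := by
    rw [← hwx, map_sum]; simp [smul_eq_mul]
  have hzero : ∀ y ∈ s, w y * (l x - l y) = 0 := by
    have hsum : ∑ y ∈ s, w y * (l x - l y) = 0 := by
      simp only [mul_sub]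
      rw [Finset.sum_sub_distrib, ← Finset.sum_mul, hw1, one_mul, hlx, sub_self]
    exact (Finset.sum_eq_zero_iff_of_nonneg fun y hy =>
      mul_nonneg (hw0 y hy) (sub_nonneg.mpr (hmax y (hmem y hy)))).mp hsum
  have hgx : g x = ∑ y ∈ s, w y * g y := by
    rw [← hwx, map_sum]; simp [smul_eq_mul]
  rw [hgx, ← hw1]
  refine Finset.sum_congr rfl fun y hy => ?_
  rcases eq_or_ne (w y) 0 with h | h
  · simp [h]
  · have hly : l y = l x := by
      rcases mul_eq_zero.mp (hzero y hy) with h' | h'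
      · exact absurd h' h
      · linarith [sub_eq_zero.mp h']
    rw [hg y (hmem y hy) hly, mul_one]

lemma hansen_swap_eq {n : ℕ} (I I' : Finset (Fin n)) (c : Fin n)
    (hcI : c ∈ I) (hcI' : c ∈ I') :
    hansenVert (I.erase c) + -hansenVert (I'.erase c) = hansenVert I + -hansenVert I' := by
  funext j
  induction j using Fin.cases with
  | zero => simp [hansenVert]
  | succ i =>
    simp only [Pi.add_apply, Pi.neg_apply, hansenVert, Fin.cases_succ]
    by_cases hic : i = c
    · subst hic; simp [hcI, hcI']
    · simp [Finset.mem_erase, hic]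

lemma hansenFun_apply {n : ℕ} (ε : ℝ) (B : Finset (Fin n)) (x : Fin (n + 1) → ℝ) :
    hansenFun ε B x = ε * (-(x 0) + 2 * ∑ i ∈ B, x i.succ) := rfl

/-- Characterization of primitive faces: a nonempty (exposed) face `F` of the Hansen
polytope of a split graph `G = C ∪ S` is contained in no type-(1)-facet `[ε, B]`
(`ε = ±1`, `B ⊆ C`) if and only if `F` contains type-(1)-vertices of both signs,
i.e. vertices `e_0 + ∑_{i ∈ A} e_i` and `−(e_0 + ∑_{i ∈ A'} e_i)` with `A, A' ⊆ S`. -/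
theorem primitive_iff_type1_vertices {n : ℕ} (G : SimpleGraph (Fin n))
    (C S : Finset (Fin n)) (hdisj : Disjoint C S) (hcover : C ∪ S = Finset.univ)
    (hC : G.IsClique (↑C : Set (Fin n))) (hS : IsStable G S)
    (F : Set (Fin (n + 1) → ℝ)) (hF : IsExposed ℝ (hansenPolytope G) F)
    (hFne : F.Nonempty) :
    (∀ ε : ℝ, (ε = 1 ∨ ε = -1) → ∀ B ⊆ C, ¬ F ⊆ hFace G ε B) ↔
      ((∃ A ⊆ S, hansenVert A ∈ F) ∧ (∃ A' ⊆ S, -hansenVert A' ∈ F)) := by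
  classical
  set V : Set (Fin (n + 1) → ℝ) :=
    {x | ∃ I : Finset (Fin n), IsStable G I ∧ (x = hansenVert I ∨ x = -hansenVert I)} with hVdef
  have hVfin : V.Finite := by
    refine Set.Finite.subset (Set.Finite.union (Set.finite_range (fun I : Finset (Fin n) => hansenVert I))
      (Set.finite_range (fun I : Finset (Fin n) => -hansenVert I))) ?_
    rintro x ⟨I, -, h | h⟩
    · exact Or.inl ⟨I, h.symm⟩
    · exact Or.inr ⟨I, h.symm⟩
  have hVP : V ⊆ hansenPolytope G := subset_convexHull ℝ V
  obtain ⟨l, hl⟩ := hF hFne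
  have hFP : F ⊆ hansenPolytope G := by rw [hl]; exact fun x hx => hx.1
  have hmaxF : ∀ x ∈ F, ∀ y ∈ hansenPolytope G, l y ≤ l x := by
    rw [hl]; exact fun x hx => hx.2
  have hmemF : ∀ v, v ∈ hansenPolytope G → (∃ x ∈ F, l v = l x) → v ∈ F := by
    rintro v hv ⟨x, hxF, hlv⟩
    rw [hl]
    exact ⟨hv, fun y hy => (hmaxF x hxF y hy).trans_eq hlv.symm⟩
  have hCS : ∀ d : Fin n, d ∈ C ∨ d ∈ S := by
    intro d
    have : d ∈ C ∪ S := by rw [hcover]; exact Finset.mem_univ d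
    exact Finset.mem_union.mp this
  have hswap : ∀ (I I' : Finset (Fin n)), IsStable G I → IsStable G I' → ∀ c, c ∈ I → c ∈ I' →
      hansenVert I ∈ F → -hansenVert I' ∈ F →
      hansenVert (I.erase c) ∈ F ∧ -hansenVert (I'.erase c) ∈ F := by
    intro I I' hI hI' c hcI hcI' h1 h2
    have hw1P : hansenVert (I.erase c) ∈ hansenPolytope G :=
      hVP ⟨I.erase c, stable_subset hI (Finset.erase_subset _ _), Or.inl rfl⟩
    have hw2P : -hansenVert (I'.erase c) ∈ hansenPolytope G :=
      hVP ⟨I'.erase c, stable_subset hI' (Finset.erase_subset _ _), Or.inr rfl⟩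
    have hsum : l (hansenVert (I.erase c)) + l (-hansenVert (I'.erase c))
        = l (hansenVert I) + l (-hansenVert I') := by
      rw [← map_add, ← map_add, hansen_swap_eq I I' c hcI hcI']
    have hMeq : l (hansenVert I) = l (-hansenVert I') :=
      le_antisymm (hmaxF _ h2 _ (hFP h1)) (hmaxF _ h1 _ (hFP h2))
    have h1' : l (hansenVert (I.erase c)) ≤ l (hansenVert I) := hmaxF _ h1 _ hw1P
    have h2' : l (-hansenVert (I'.erase c)) ≤ l (hansenVert I) := hmaxF _ h1 _ hw2P
    exact ⟨hmemF _ hw1P ⟨_, h1, by linarith⟩, hmemF _ hw2P ⟨_, h1, by linarith⟩⟩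
  -- subset of S from erase
  have herS : ∀ (I : Finset (Fin n)), IsStable G I → ∀ c, c ∈ C → c ∈ I → I.erase c ⊆ S := by
    intro I hI c hcC hcI d hd
    obtain ⟨hdc, hdI⟩ := Finset.mem_erase.mp hd
    rcases hCS d with h | h
    · exact absurd (hC h hcC hdc) (hI hdI hcI)
    · exact h
  constructor
  · intro hprim
    constructor
    · by_contra hno
      push_neg at hno
      refine hprim 1 (Or.inl rfl) (C.filter (fun c => ∃ I : Finset (Fin n),
        IsStable G I ∧ c ∈ I ∧ hansenVert I ∈ F)) (Finset.filter_subset _ _) fun x hxF => ?_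
      set B := C.filter (fun c => ∃ I : Finset (Fin n),
        IsStable G I ∧ c ∈ I ∧ hansenVert I ∈ F) with hBdef
      have hg : hansenFun 1 B x = 1 := by
        refine face_val hVfin l.toLinearMap (hansenFun 1 B) (hFP hxF)
          (fun v hv => hmaxF x hxF v (hVP hv)) ?_
        rintro v ⟨I, hI, hcase | hcase⟩ hlv
        · subst hcase
          have hvF : hansenVert I ∈ F := hmemF _ (hVP ⟨I, hI, Or.inl rfl⟩) ⟨x, hxF, hlv⟩
          have hIC : ∃ c ∈ I, c ∈ C := by
            by_contra hcon
            push_neg at hcon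
            refine hno I (fun a ha => ?_) hvF
            rcases hCS a with h | h
            · exact absurd h (hcon a ha)
            · exact h
          obtain ⟨c, hcI, hcC⟩ := hIC
          have hcB : c ∈ B := Finset.mem_filter.mpr ⟨hcC, I, hI, hcI, hvF⟩
          have hsing : B.filter (· ∈ I) = {c} :=
            filter_eq_singleton_of_clique hC hI (Finset.filter_subset _ _) hcI hcB
          rw [hansenFun_apply, hansenVert_zero, sum_hansenVert, hsing]
          norm_num
        · subst hcase
          have hvF : -hansenVert I ∈ F := hmemF _ (hVP ⟨I, hI, Or.inr rfl⟩) ⟨x, hxF, hlv⟩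
          have hfe : B.filter (· ∈ I) = ∅ := by
            rw [Finset.filter_eq_empty_iff]
            intro c hcB hcI
            obtain ⟨hcC, I₀, hI₀, hcI₀, hI₀F⟩ := Finset.mem_filter.mp hcB
            exact hno (I₀.erase c) (herS I₀ hI₀ c hcC hcI₀)
              (hswap I₀ I hI₀ hI c hcI₀ hcI hI₀F hvF).1
          rw [hansenFun_apply]
          simp only [Pi.neg_apply, hansenVert_zero, Finset.sum_neg_distrib]
          rw [sum_hansenVert, hfe]
          norm_num
      rw [hansenFun_apply] at hg
      exact ⟨hFP hxF, hg⟩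
    · by_contra hno
      push_neg at hno
      refine hprim (-1) (Or.inr rfl) (C.filter (fun c => ∃ I : Finset (Fin n),
        IsStable G I ∧ c ∈ I ∧ -hansenVert I ∈ F)) (Finset.filter_subset _ _) fun x hxF => ?_
      set B := C.filter (fun c => ∃ I : Finset (Fin n),
        IsStable G I ∧ c ∈ I ∧ -hansenVert I ∈ F) with hBdef
      have hg : hansenFun (-1) B x = 1 := by
        refine face_val hVfin l.toLinearMap (hansenFun (-1) B) (hFP hxF)
          (fun v hv => hmaxF x hxF v (hVP hv)) ?_
        rintro v ⟨I, hI, hcase | hcase⟩ hlv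
        · subst hcase
          have hvF : hansenVert I ∈ F := hmemF _ (hVP ⟨I, hI, Or.inl rfl⟩) ⟨x, hxF, hlv⟩
          have hfe : B.filter (· ∈ I) = ∅ := by
            rw [Finset.filter_eq_empty_iff]
            intro c hcB hcI
            obtain ⟨hcC, I₀, hI₀, hcI₀, hI₀F⟩ := Finset.mem_filter.mp hcB
            exact hno (I₀.erase c) (herS I₀ hI₀ c hcC hcI₀)
              (hswap I I₀ hI hI₀ c hcI hcI₀ hvF hI₀F).2
          rw [hansenFun_apply, hansenVert_zero, sum_hansenVert, hfe]
          norm_num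
        · subst hcase
          have hvF : -hansenVert I ∈ F := hmemF _ (hVP ⟨I, hI, Or.inr rfl⟩) ⟨x, hxF, hlv⟩
          have hIC : ∃ c ∈ I, c ∈ C := by
            by_contra hcon
            push_neg at hcon
            refine hno I (fun a ha => ?_) hvF
            rcases hCS a with h | h
            · exact absurd h (hcon a ha)
            · exact h
          obtain ⟨c, hcI, hcC⟩ := hIC
          have hcB : c ∈ B := Finset.mem_filter.mpr ⟨hcC, I, hI, hcI, hvF⟩
          have hsing : B.filter (· ∈ I) = {c} :=
            filter_eq_singleton_of_clique hC hI (Finset.filter_subset _ _) hcI hcB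
          rw [hansenFun_apply]
          simp only [Pi.neg_apply, hansenVert_zero, Finset.sum_neg_distrib]
          rw [sum_hansenVert, hsing]
          norm_num
      rw [hansenFun_apply] at hg
      exact ⟨hFP hxF, hg⟩
  · rintro ⟨⟨A, hAS, hAF⟩, ⟨A', hA'S, hA'F⟩⟩ ε hε B hBC hsub
    have hABempty : ∀ (T : Finset (Fin n)), T ⊆ S → B.filter (· ∈ T) = ∅ := by
      intro T hTS
      rw [Finset.filter_eq_empty_iff]
      intro c hcB hcT
      exact Finset.disjoint_left.mp hdisj (hBC hcB) (hTS hcT)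
    rcases hε with rfl | rfl
    · have h := (hsub hAF).2
      rw [hansenVert_zero, sum_hansenVert, hABempty A hAS] at h
      norm_num at h
    · have h := (hsub hA'F).2
      simp only [Pi.neg_apply, hansenVert_zero, Finset.sum_neg_distrib] at h
      rw [sum_hansenVert, hABempty A' hA'S] at h
      norm_num at h
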